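/- Uniqueness of evaluation-context decomposition in λcc: if e is a closed expression that is not a value and K1[r1] = e = K2[r2] where r1 and r2 are redexes (expressions that can take a local reduction step in their respective contexts), then K1 = K2 and r1 = r2. -/
import Mathlib


namespace CC

mutual
inductive Expr : Type where
  | val (v : Val)
  | var (x : String)
  | app (e1 e2 : Expr)
  | natop (e1 e2 : Expr)
  | ite (e1 e2 e3 : Expr)
  | callcc (x : String) (e : Expr)
  | throw (e1 e2 : Expr)
inductive Val : Type where
  | nat (n : Nat)
  | recfun (f x : String) (e : Expr)
  | cont (K : Ectx)
inductive Ectx : Type where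
  | hole
  | ite (K : Ectx) (e1 e2 : Expr)
  | appL (K : Ectx) (v : Val)
  | appR (e : Expr) (K : Ectx)
  | natopR (e : Expr) (K : Ectx)
  | natopL (K : Ectx) (v : Val)
  | throwL (K : Ectx) (e : Expr)
  | throwR (v : Val) (K : Ectx)
end

/-- Plug an expression into the hole of an evaluation context. -/
def plug : Ectx → Expr → Expr
  | .hole, e => e
  | .ite K e1 e2, e => .ite (plug K e) e1 e2
  | .appL K v, e => .app (plug K e) (.val v)
  | .appR e' K, e => .app e' (plug K e)
  | .natopR e' K, e => .natop e' (plug K e)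
  | .natopL K v, e => .natop (plug K e) (.val v)
  | .throwL K e', e => .throw (plug K e) e'
  | .throwR v K, e => .throw (.val v) (plug K e)

mutual
/-- Substitution of a (closed) value for a variable. -/
def substE (x : String) (w : Val) : Expr → Expr
  | .val v => .val (substV x w v)
  | .var y => if y = x then .val w else .var y
  | .app e1 e2 => .app (substE x w e1) (substE x w e2)
  | .natop e1 e2 => .natop (substE x w e1) (substE x w e2)
  | .ite e1 e2 e3 => .ite (substE x w e1) (substE x w e2) (substE x w e3)
  | .callcc y e => if y = x then .callcc y e else .callcc y (substE x w e)
  | .throw e1 e2 => .throw (substE x w e1) (substE x w e2)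
def substV (x : String) (w : Val) : Val → Val
  | .nat n => .nat n
  | .recfun f y e =>
      if f = x ∨ y = x then .recfun f y e else .recfun f y (substE x w e)
  | .cont K => .cont (substK x w K)
def substK (x : String) (w : Val) : Ectx → Ectx
  | .hole => .hole
  | .ite K e1 e2 => .ite (substK x w K) (substE x w e1) (substE x w e2)
  | .appL K v => .appL (substK x w K) (substV x w v)
  | .appR e K => .appR (substE x w e) (substK x w K)
  | .natopR e K => .natopR (substE x w e) (substK x w K)
  | .natopL K v => .natopL (substK x w K) (substV x w v)
  | .throwL K e => .throwL (substK x w K) (substE x w e)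
  | .throwR v K => .throwR (substV x w v) (substK x w K)
end

/-- Local (context-parameterized) head reduction `e →K e'`. -/
inductive Head : Ectx → Expr → Expr → Prop where
  | beta (K : Ectx) (f x : String) (e : Expr) (v : Val) :
      Head K (.app (.val (.recfun f x e)) (.val v))
        (substE x v (substE f (.recfun f x e) e))
  | natop (K : Ectx) (n m : Nat) :
      Head K (.natop (.val (.nat n)) (.val (.nat m))) (.val (.nat (n + m)))
  | ite_true (K : Ectx) (n : Nat) (e1 e2 : Expr) (h : n ≠ 0) :
      Head K (.ite (.val (.nat n)) e1 e2) e1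
  | ite_false (K : Ectx) (e1 e2 : Expr) :
      Head K (.ite (.val (.nat 0)) e1 e2) e2
  | callcc (K : Ectx) (x : String) (e : Expr) :
      Head K (.callcc x e) (substE x (.cont K) e)

/-- Program reduction. -/
inductive Step : Expr → Expr → Prop where
  | head {K : Ectx} {e e' : Expr} : Head K e e' → Step (plug K e) (plug K e')
  | throw (K : Ectx) (v : Val) (K' : Ectx) :
      Step (plug K (.throw (.val v) (.val (.cont K')))) (plug K' (.val v))

end CC

namespace CC

mutual
/-- Free variables of expressions. -/
def fvE : Expr → Finset String
  | .val v => fvV v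
  | .var y => {y}
  | .app e1 e2 => fvE e1 ∪ fvE e2
  | .natop e1 e2 => fvE e1 ∪ fvE e2
  | .ite e1 e2 e3 => fvE e1 ∪ fvE e2 ∪ fvE e3
  | .callcc y e => (fvE e).erase y
  | .throw e1 e2 => fvE e1 ∪ fvE e2
def fvV : Val → Finset String
  | .nat _ => ∅
  | .recfun f y e => ((fvE e).erase y).erase f
  | .cont K => fvK K
def fvK : Ectx → Finset String
  | .hole => ∅
  | .ite K e1 e2 => fvK K ∪ fvE e1 ∪ fvE e2
  | .appL K v => fvK K ∪ fvV v
  | .appR e K => fvE e ∪ fvK K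
  | .natopR e K => fvE e ∪ fvK K
  | .natopL K v => fvK K ∪ fvV v
  | .throwL K e => fvK K ∪ fvE e
  | .throwR v K => fvV v ∪ fvK K
end

/-- Redexes of λcc. -/
inductive IsRedex : Expr → Prop where
  | beta (f x : String) (e : Expr) (v : Val) :
      IsRedex (.app (.val (.recfun f x e)) (.val v))
  | natop (n m : Nat) : IsRedex (.natop (.val (.nat n)) (.val (.nat m)))
  | ite (n : Nat) (e1 e2 : Expr) : IsRedex (.ite (.val (.nat n)) e1 e2)
  | callcc (x : String) (e : Expr) : IsRedex (.callcc x e)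
  | throw (v : Val) (K : Ectx) : IsRedex (.throw (.val v) (.val (.cont K)))

end CC


namespace CC

theorem plug_redex_ne_val (K : Ectx) (r : Expr) (v : Val) (hr : IsRedex r) :
    plug K r ≠ .val v := by
  cases K <;> simp [plug]
  cases hr <;> simp

theorem plug_redex_hole (K : Ectx) (r r' : Expr) (hr : IsRedex r) (hr' : IsRedex r')
    (h : plug K r = r') : K = .hole ∧ r = r' := by
  cases K
  case hole => exact ⟨rfl, h⟩
  all_goals
    exfalso
    cases hr' <;>
      simp only [plug, Expr.ite.injEq, Expr.app.injEq, Expr.natop.injEq,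
        Expr.throw.injEq] at h <;>
      first
        | exact plug_redex_ne_val _ _ _ hr h.1
        | exact plug_redex_ne_val _ _ _ hr h.2.1
        | exact plug_redex_ne_val _ _ _ hr h.2
        | exact plug_redex_ne_val _ _ _ hr h
        | exact absurd h (by simp)

theorem plug_uniq (K1 : Ectx) : ∀ (K2 : Ectx) (r1 r2 : Expr), IsRedex r1 → IsRedex r2 →
    plug K1 r1 = plug K2 r2 → K1 = K2 ∧ r1 = r2 := by
  intro K2 r1 r2 hr1 hr2 heq
  cases K1 with
  | hole =>
    obtain ⟨rfl, rfl⟩ := plug_redex_hole K2 r2 r1 hr2 hr1 heq.symm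
    exact ⟨rfl, rfl⟩
  | _ =>
    cases K2
    case hole =>
      exact absurd (plug_redex_hole _ _ _ hr1 hr2 heq).1 (by simp)
    all_goals
      simp only [plug, Expr.ite.injEq, Expr.app.injEq, Expr.natop.injEq,
        Expr.throw.injEq, Expr.val.injEq] at heq
    all_goals
      first
        | exact Expr.noConfusion heq
        | exact absurd heq.2 (plug_redex_ne_val _ _ _ hr1)
        | exact absurd heq.1 (plug_redex_ne_val _ _ _ hr1)
        | exact absurd heq.2.symm (plug_redex_ne_val _ _ _ hr2)
        | exact absurd heq.1.symm (plug_redex_ne_val _ _ _ hr2)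
        | (obtain ⟨h, rfl, rfl⟩ := heq
           obtain ⟨rfl, rfl⟩ := plug_uniq _ _ _ _ hr1 hr2 h
           exact ⟨rfl, rfl⟩)
        | (obtain ⟨h, rfl⟩ := heq
           obtain ⟨rfl, rfl⟩ := plug_uniq _ _ _ _ hr1 hr2 h
           exact ⟨rfl, rfl⟩)
        | (obtain ⟨rfl, h⟩ := heq
           obtain ⟨rfl, rfl⟩ := plug_uniq _ _ _ _ hr1 hr2 h
           exact ⟨rfl, rfl⟩)

end CC

/-- uniqueness of evaluation-context decomposition in λcc. -/
theorem cc_unique_decomposition (e : CC.Expr)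
    (K1 K2 : CC.Ectx) (r1 r2 : CC.Expr)
    (hclosed : CC.fvE e = ∅)
    (hnv : ∀ v : CC.Val, e ≠ .val v)
    (h1 : CC.plug K1 r1 = e) (h2 : CC.plug K2 r2 = e)
    (hr1 : CC.IsRedex r1) (hr2 : CC.IsRedex r2) :
    K1 = K2 ∧ r1 = r2 := by
  subst h1
  exact CC.plug_uniq K1 K2 r1 r2 hr1 hr2 h2.symm
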